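/- arXiv:1901.03000 — 2 statements merged into one kernel-verified Lean document; each statement's English description precedes it below -/
import Mathlib

section
/- Assume k ≤ LR, and let s* be the selected node distribution with s*_0 = 0, s*_i = R for 1 ≤ i ≤ ⌊k/R⌋, s*_{⌊k/R⌋+1} = k − ⌊k/R⌋·R, and s*_i = 0 for all larger i, and let π*(s*) be its vertical order. Then for every 1 ≤ i ≤ k one has a_i(π*(s*)) + b_i(π*(s*)) = d_I + d_C + 1 − i; equivalently, i − h_{π*(s*)}(i) ≤ d_C for every 1 ≤ i ≤ k. -/
/-- Relative location `h_π(i) = #{1 ≤ j ≤ i : π j = π i}`. -/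
def relLoc (π : ℕ → ℕ) (i : ℕ) : ℕ :=
  ((Finset.Icc 1 i).filter (fun j => π j = π i)).card

/-- Intra-cluster coefficient `a_i(π) = d_I + 1 − h_π(i)` (truncated subtraction). -/
def aCoef (dI : ℕ) (π : ℕ → ℕ) (i : ℕ) : ℕ :=
  dI + 1 - relLoc π i

/-- Cross-cluster coefficient `b_i(π) = max(0, d_C − (i − h_π(i)))` (truncated subtraction). -/
def bCoef (dC : ℕ) (π : ℕ → ℕ) (i : ℕ) : ℕ :=
  dC - (i - relLoc π i)

/-- Part incoming weight `w_i(π)`: for a separate position (`π i = 0`) it is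
`(d_I + d_C + 1 − i)·β_C`, otherwise `a_i(π)·β_I + b_i(π)·β_C`. -/
noncomputable def weight (dI dC : ℕ) (βI βC : ℝ) (π : ℕ → ℕ) (i : ℕ) : ℝ :=
  if π i = 0 then ((dI + dC + 1 - i : ℕ) : ℝ) * βC
  else (aCoef dI π i : ℝ) * βI + (bCoef dC π i : ℝ) * βC

/-- Min-cut `MC(π) = Σ_{i=1}^k min(α, w_i(π))`. -/
noncomputable def MC (k dI dC : ℕ) (βI βC α : ℝ) (π : ℕ → ℕ) : ℝ :=
  ∑ i ∈ Finset.Icc 1 k, min α (weight dI dC βI βC π i)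

/-- A cluster order: a `k`-tuple with entries in `{0, 1, …, L}`. -/
def IsClusterOrder (L k : ℕ) (π : ℕ → ℕ) : Prop :=
  ∀ i, 1 ≤ i → i ≤ k → π i ≤ L

/-- A selected node distribution `(s_0, s_1, …, s_L)`:
`R ≥ s_1 ≥ s_2 ≥ … ≥ s_L` and `s_0 + s_1 + … + s_L = k`. -/
def IsDist (L R k : ℕ) (s : ℕ → ℕ) : Prop :=
  (∀ i, 1 ≤ i → i + 1 ≤ L → s (i + 1) ≤ s i) ∧
  (∀ i, 1 ≤ i → i ≤ L → s i ≤ R) ∧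
  ∑ i ∈ Finset.range (L + 1), s i = k

/-- `π ∈ Π(s)`: `π` is a cluster order with `#{1 ≤ j ≤ k : π j = c} = s c` for all `0 ≤ c ≤ L`. -/
def MemPi (L k : ℕ) (s : ℕ → ℕ) (π : ℕ → ℕ) : Prop :=
  IsClusterOrder L k π ∧
  ∀ c, c ≤ L → ((Finset.Icc 1 k).filter (fun j => π j = c)).card = s c

/-- Vertical order of distribution `s` (possibly with separate entries, whose positions are
not constrained here):  over the cluster positions (`π i ≠ 0`) in increasing order, relative
locations are nondecreasing, with ties broken by increasing cluster index. -/
def IsVerticalOrder (L k : ℕ) (s : ℕ → ℕ) (π : ℕ → ℕ) : Prop :=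
  MemPi L k s π ∧
  ∀ i j, 1 ≤ i → i < j → j ≤ k → π i ≠ 0 → π j ≠ 0 →
    relLoc π i ≤ relLoc π j ∧ (relLoc π i = relLoc π j → π i < π j)

/-- The distribution `s*` (no separate node): `s*_0 = 0`, `s*_i = R` for `1 ≤ i ≤ ⌊k/R⌋`,
`s*_{⌊k/R⌋+1} = k − ⌊k/R⌋·R`, and `0` beyond. -/
def sStar0 (R k : ℕ) : ℕ → ℕ := fun i =>
  if i = 0 then 0
  else if i ≤ k / R then R
  else if i = k / R + 1 then k - k / R * R
  else 0

/-- The distribution with one separate node: `s_0 = 1`, `s_i = R` for `1 ≤ i ≤ ⌊(k−1)/R⌋`,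
`s_{⌊(k−1)/R⌋+1} = (k−1) − ⌊(k−1)/R⌋·R`, and `0` beyond. -/
def sStar1 (R k : ℕ) : ℕ → ℕ := fun i =>
  if i = 0 then 1
  else if i ≤ (k - 1) / R then R
  else if i = (k - 1) / R + 1 then (k - 1) - (k - 1) / R * R
  else 0

/-- `π^(j)`: the cluster order with exactly one separate entry, located at position `j`,
whose cluster entries form the vertical order of the distribution `sStar1 R k`. -/
def IsPiJ (L R k j : ℕ) (π : ℕ → ℕ) : Prop :=
  π j = 0 ∧ IsVerticalOrder L k (sStar1 R k) π

-- basic facts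
lemma relLoc_pos (π : ℕ → ℕ) (i : ℕ) (hi : 1 ≤ i) : 1 ≤ relLoc π i := by
  have : i ∈ (Finset.Icc 1 i).filter (fun j => π j = π i) := by
    simp [Finset.mem_filter, Finset.mem_Icc, hi]
  exact Finset.card_pos.mpr ⟨i, this⟩

lemma relLoc_le (π : ℕ → ℕ) (i : ℕ) : relLoc π i ≤ i := by
  calc relLoc π i ≤ (Finset.Icc 1 i).card := Finset.card_filter_le _ _
    _ = i := by simp

lemma relLoc_max' (π : ℕ → ℕ) (i c : ℕ)
    (hS : ((Finset.Icc 1 i).filter (fun j => π j = c)).Nonempty) :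
    relLoc π (((Finset.Icc 1 i).filter (fun j => π j = c)).max' hS)
      = ((Finset.Icc 1 i).filter (fun j => π j = c)).card := by
  set S := (Finset.Icc 1 i).filter (fun j => π j = c) with hSdef
  set j0 := S.max' hS with hj0
  have hj0mem : j0 ∈ S := S.max'_mem hS
  have hπj0 : π j0 = c := (Finset.mem_filter.mp hj0mem).2
  have hj0i : j0 ≤ i := (Finset.mem_Icc.mp (Finset.mem_filter.mp hj0mem).1).2
  have heq : (Finset.Icc 1 j0).filter (fun j => π j = π j0) = S := by
    ext j
    simp only [Finset.mem_filter, Finset.mem_Icc, hSdef, hπj0]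
    constructor
    · rintro ⟨⟨h1, h2⟩, h3⟩; exact ⟨⟨h1, h2.trans hj0i⟩, h3⟩
    · rintro ⟨⟨h1, h2⟩, h3⟩
      exact ⟨⟨h1, S.le_max' j (by simp [hSdef, Finset.mem_filter, Finset.mem_Icc, h1, h2, h3])⟩, h3⟩
  unfold relLoc
  rw [heq]

section Main
variable {L R k : ℕ} {π : ℕ → ℕ}

lemma pi_ne_zero (hπ : IsVerticalOrder L k (sStar0 R k) π)
    {j : ℕ} (h1 : 1 ≤ j) (h2 : j ≤ k) : π j ≠ 0 := by
  have hc := hπ.1.2 0 (Nat.zero_le L)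
  have : ((Finset.Icc 1 k).filter (fun j => π j = 0)).card = 0 := by
    rw [hc]; simp [sStar0]
  intro h
  have hemp := Finset.card_eq_zero.mp this
  have hmem : j ∈ (Finset.Icc 1 k).filter (fun j => π j = 0) := by
    simp [Finset.mem_filter, Finset.mem_Icc, h1, h2, h]
  rw [hemp] at hmem
  exact absurd hmem (Finset.notMem_empty j)

lemma relLoc_succ (hπ : IsVerticalOrder L k (sStar0 R k) π)
    {i : ℕ} (h1 : 1 ≤ i) (h2 : i + 1 ≤ k) :
    relLoc π (i + 1) ≤ relLoc π i + 1 := by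
  set c := π (i + 1) with hc
  set S := (Finset.Icc 1 i).filter (fun j => π j = c) with hS
  have hins : (Finset.Icc 1 (i+1)).filter (fun j => π j = c) = insert (i+1) S := by
    ext j
    simp only [Finset.mem_filter, Finset.mem_Icc, Finset.mem_insert, hS]
    constructor
    · rintro ⟨⟨ha, hb⟩, hp⟩
      rcases Nat.eq_or_lt_of_le hb with h | h
      · exact Or.inl h
      · exact Or.inr ⟨⟨ha, by omega⟩, hp⟩
    · rintro (rfl | ⟨⟨ha, hb⟩, hp⟩)
      · exact ⟨⟨by omega, le_refl _⟩, rfl⟩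
      · exact ⟨⟨ha, by omega⟩, hp⟩
  have hni : i + 1 ∉ S := by simp [hS, Finset.mem_filter, Finset.mem_Icc]
  have hcard : relLoc π (i + 1) = S.card + 1 := by
    unfold relLoc
    rw [← hc, hins, Finset.card_insert_of_notMem hni]
  rcases S.eq_empty_or_nonempty with he | hne
  · rw [hcard, he]; simp
  · set j0 := S.max' hne with hj0
    have hmax : relLoc π j0 = S.card := relLoc_max' π i c hne
    have hj0mem : j0 ∈ S := S.max'_mem hne
    have hj0i : j0 ≤ i := (Finset.mem_Icc.mp (Finset.mem_filter.mp hj0mem).1).2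
    have hj01 : 1 ≤ j0 := (Finset.mem_Icc.mp (Finset.mem_filter.mp hj0mem).1).1
    rcases Nat.eq_or_lt_of_le hj0i with h | h
    · rw [hcard, ← hmax, h]
    · have hz1 : π j0 ≠ 0 := pi_ne_zero hπ hj01 (by omega)
      have hz2 : π i ≠ 0 := pi_ne_zero hπ h1 (by omega)
      have := (hπ.2 j0 i hj01 h (by omega) hz1 hz2).1
      rw [hcard]
      omega

lemma sub_relLoc_mono (hπ : IsVerticalOrder L k (sStar0 R k) π)
    {i j : ℕ} (h1 : 1 ≤ i) (hij : i ≤ j) (hjk : j ≤ k) :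
    i - relLoc π i ≤ j - relLoc π j := by
  induction j, hij using Nat.le_induction with
  | base => exact le_refl _
  | succ n hn ih =>
    have hnk : n + 1 ≤ k := hjk
    have := relLoc_succ hπ (le_trans h1 hn) hnk
    have h3 := relLoc_le π n
    have h4 := relLoc_le π (n+1)
    have := ih (by omega)
    omega

lemma relLoc_k_ge (hπ : IsVerticalOrder L k (sStar0 R k) π)
    (hL : 1 ≤ L) (hk : 1 ≤ k) (hRk : R ≤ k) (hR : 1 ≤ R) :
    R ≤ relLoc π k := by
  have hs1 : sStar0 R k 1 = R := by
    have : 1 ≤ k / R := (Nat.one_le_div_iff hR).mpr hRk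
    simp [sStar0, this]
  have hc := hπ.1.2 1 hL
  rw [hs1] at hc
  have hne : ((Finset.Icc 1 k).filter (fun j => π j = 1)).Nonempty := by
    rw [← Finset.card_pos, hc]; omega
  set j0 := ((Finset.Icc 1 k).filter (fun j => π j = 1)).max' hne with hj0
  have hmax := relLoc_max' π k 1 hne
  rw [← hj0] at hmax
  rw [hc] at hmax
  have hj0mem := ((Finset.Icc 1 k).filter (fun j => π j = 1)).max'_mem hne
  have hj0k : j0 ≤ k := (Finset.mem_Icc.mp (Finset.mem_filter.mp hj0mem).1).2
  have hj01 : 1 ≤ j0 := (Finset.mem_Icc.mp (Finset.mem_filter.mp hj0mem).1).1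
  rcases Nat.eq_or_lt_of_le hj0k with h | h
  · rw [← h]; omega
  · have hz1 : π j0 ≠ 0 := pi_ne_zero hπ hj01 hj0k
    have hz2 : π k ≠ 0 := pi_ne_zero hπ hk (le_refl _)
    have := (hπ.2 j0 k hj01 h (le_refl _) hz1 hz2).1
    omega

lemma relLoc_le_R (hπ : IsVerticalOrder L k (sStar0 R k) π)
    (hR : 1 ≤ R) {i : ℕ} (h1 : 1 ≤ i) (h2 : i ≤ k) :
    relLoc π i ≤ R := by
  have hπL : π i ≤ L := hπ.1.1 i h1 h2
  have hc := hπ.1.2 (π i) hπL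
  have hsub : relLoc π i ≤ ((Finset.Icc 1 k).filter (fun j => π j = π i)).card := by
    apply Finset.card_le_card
    apply Finset.filter_subset_filter
    exact Finset.Icc_subset_Icc_right h2
  have hsR : sStar0 R k (π i) ≤ R := by
    have h1 := Nat.div_add_mod' k R
    have h2 : k % R < R := Nat.mod_lt k hR
    unfold sStar0
    split_ifs <;> omega
  omega

-- k < R case: all entries are 1
lemma relLoc_eq_of_lt (hπ : IsVerticalOrder L k (sStar0 R k) π)
    (hkR : k < R) {i : ℕ} (h1 : 1 ≤ i) (h2 : i ≤ k) :
    relLoc π i = i := by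
  have hall : ∀ j, 1 ≤ j → j ≤ k → π j = 1 := by
    intro j hj1 hj2
    have hπL : π j ≤ L := hπ.1.1 j hj1 hj2
    have hc := hπ.1.2 (π j) hπL
    have hmem : j ∈ (Finset.Icc 1 k).filter (fun j' => π j' = π j) := by
      simp [Finset.mem_filter, Finset.mem_Icc, hj1, hj2]
    have hpos : 1 ≤ sStar0 R k (π j) := by
      rw [← hc]; exact Finset.card_pos.mpr ⟨j, hmem⟩
    have hdiv : k / R = 0 := Nat.div_eq_of_lt hkR
    by_contra hne
    have : sStar0 R k (π j) = 0 := by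
      unfold sStar0
      rcases Nat.eq_zero_or_pos (π j) with h | h
      · simp [h]
      · split_ifs with ha hb hc'
        · omega
        · omega
        · omega
        · rfl
    omega
  unfold relLoc
  have : (Finset.Icc 1 i).filter (fun j => π j = π i) = Finset.Icc 1 i := by
    apply Finset.filter_true_of_mem
    intro j hj
    rw [Finset.mem_Icc] at hj
    rw [hall j hj.1 (le_trans hj.2 h2), hall i h1 h2]
  rw [this]; simp

end Main

/-- for the vertical order of the distribution `s*` (no separate node),
`a_i + b_i = d_I + d_C + 1 − i` for every `1 ≤ i ≤ k`; equivalently `i − h(i) ≤ d_C`. -/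
theorem stmt1 (L R k dI dC : ℕ)
    (hL : 1 ≤ L) (hR : 2 ≤ R) (hk : 2 ≤ k)
    (hdI : dI = R - 1) (hdC : 1 ≤ dC) (hkd : k ≤ dI + dC)
    (hkLR : k ≤ L * R)
    (π : ℕ → ℕ) (hπ : IsVerticalOrder L k (sStar0 R k) π) :
    ∀ i, 1 ≤ i → i ≤ k →
      aCoef dI π i + bCoef dC π i = dI + dC + 1 - i ∧ i - relLoc π i ≤ dC := by
  intro i hi1 hi2
  have hhpos := relLoc_pos π i hi1
  have hhle := relLoc_le π i
  have hhR := relLoc_le_R hπ (by omega) hi1 hi2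
  have hsub : i - relLoc π i ≤ dC := by
    rcases lt_or_ge k R with hkR | hRk
    · have := relLoc_eq_of_lt hπ hkR hi1 hi2; omega
    · have h1 := sub_relLoc_mono hπ hi1 hi2 (le_refl k)
      have h2 := relLoc_k_ge hπ hL (by omega) hRk (by omega)
      have h3 := relLoc_le π k
      omega
  refine ⟨?_, hsub⟩
  unfold aCoef bCoef
  omega
end

section
/- Assume k ≤ LR, and let s* be the selected node distribution with s*_0 = 0, s*_i = R for 1 ≤ i ≤ ⌊k/R⌋, s*_{⌊k/R⌋+1} = k − ⌊k/R⌋·R, and s*_i = 0 for all larger i. Then MC(π*(s*)) ≤ MC(π*(s)) for every selected node distribution s with s_0 = 0; that is, among all distributions without separate nodes, the output s* of the horizontal selection algorithm (Algorithm 2), combined with its vertical order, minimizes the min-cut. -/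
namespace Stmt3Aux

open Finset

lemma relLoc_pos (π : ℕ → ℕ) {i : ℕ} (hi : 1 ≤ i) : 1 ≤ relLoc π i := by
  have h : i ∈ (Finset.Icc 1 i).filter (fun j => π j = π i) := by
    simp [Finset.mem_filter, Finset.mem_Icc, hi]
  exact Finset.card_pos.mpr ⟨i, h⟩

lemma relLoc_le_self (π : ℕ → ℕ) (i : ℕ) : relLoc π i ≤ i := by
  calc relLoc π i ≤ (Finset.Icc 1 i).card := Finset.card_filter_le _ _
    _ = i := by simp

lemma pi_ne_zero {L k : ℕ} {s π : ℕ → ℕ} (h : MemPi L k s π) (hs0 : s 0 = 0)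
    {i : ℕ} (hi1 : 1 ≤ i) (hik : i ≤ k) : π i ≠ 0 := by
  intro h0
  have hc := h.2 0 (Nat.zero_le L)
  rw [hs0, Finset.card_eq_zero] at hc
  have hmem : i ∈ (Finset.Icc 1 k).filter (fun j => π j = 0) := by
    simp [Finset.mem_filter, Finset.mem_Icc, hi1, hik, h0]
  rw [hc] at hmem
  exact absurd hmem (Finset.notMem_empty i)

lemma relLoc_le_s {L k : ℕ} {s π : ℕ → ℕ} (h : MemPi L k s π)
    {i : ℕ} (hi1 : 1 ≤ i) (hik : i ≤ k) : relLoc π i ≤ s (π i) := by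
  rw [← h.2 (π i) (h.1 i hi1 hik)]
  apply Finset.card_le_card
  intro j hj
  simp only [Finset.mem_filter, Finset.mem_Icc] at hj ⊢
  exact ⟨⟨hj.1.1, hj.1.2.trans hik⟩, hj.2⟩

lemma relLoc_mono {L k : ℕ} {s π : ℕ → ℕ} (hV : IsVerticalOrder L k s π) (hs0 : s 0 = 0)
    {i j : ℕ} (hi : 1 ≤ i) (hij : i ≤ j) (hj : j ≤ k) : relLoc π i ≤ relLoc π j := by
  rcases eq_or_lt_of_le hij with rfl | hlt
  · exact le_rfl
  · exact (hV.2 i j hi hlt hj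
      (pi_ne_zero hV.1 hs0 hi (le_of_lt (lt_of_lt_of_le hlt hj)))
      (pi_ne_zero hV.1 hs0 (le_trans hi hij) hj)).1

lemma relLoc_strict {π : ℕ → ℕ} {j j' : ℕ} (h1 : 1 ≤ j') (hlt : j < j')
    (hc : π j = π j') : relLoc π j < relLoc π j' := by
  apply Finset.card_lt_card
  constructor
  · intro x hx
    simp only [Finset.mem_filter, Finset.mem_Icc] at hx ⊢
    exact ⟨⟨hx.1.1, le_of_lt (lt_of_le_of_lt hx.1.2 hlt)⟩, hx.2.trans hc⟩
  · intro hsub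
    have : j' ∈ (Finset.Icc 1 j).filter (fun x => π x = π j) := by
      apply hsub
      simp [Finset.mem_filter, Finset.mem_Icc, h1]
    simp only [Finset.mem_filter, Finset.mem_Icc] at this
    omega

/-- Per-cluster count: positions in cluster `c` with relative location `≤ t`. -/
lemma count_cluster {L k : ℕ} {s π : ℕ → ℕ} (h : MemPi L k s π)
    {c : ℕ} (hcL : c ≤ L) (hc1 : 1 ≤ c) (t : ℕ) :
    (((Finset.Icc 1 k).filter (fun j => π j = c)).filter (fun j => relLoc π j ≤ t)).card
      = min (s c) t := by
  set S := (Finset.Icc 1 k).filter (fun j => π j = c) with hS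
  have hcard : S.card = s c := h.2 c hcL
  have hmemS : ∀ j ∈ S, 1 ≤ j ∧ j ≤ k ∧ π j = c := by
    intro j hj
    simp only [hS, Finset.mem_filter, Finset.mem_Icc] at hj
    exact ⟨hj.1.1, hj.1.2, hj.2⟩
  have hinj : Set.InjOn (relLoc π) S := by
    intro x hx y hy hxy
    obtain ⟨hx1, hxk, hxc⟩ := hmemS x hx
    obtain ⟨hy1, hyk, hyc⟩ := hmemS y hy
    by_contra hne
    rcases Nat.lt_or_ge x y with hlt | hge
    · exact absurd hxy (Nat.ne_of_lt (relLoc_strict hy1 hlt (hxc.trans hyc.symm)))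
    · have hlt : y < x := lt_of_le_of_ne hge (Ne.symm hne)
      exact absurd hxy.symm (Nat.ne_of_lt (relLoc_strict hx1 hlt (hyc.trans hxc.symm)))
  have himsub : S.image (relLoc π) ⊆ Finset.Icc 1 (s c) := by
    intro v hv
    simp only [Finset.mem_image] at hv
    obtain ⟨j, hj, rfl⟩ := hv
    obtain ⟨hj1, hjk, hjc⟩ := hmemS j hj
    refine Finset.mem_Icc.mpr ⟨relLoc_pos π hj1, ?_⟩
    have := relLoc_le_s h hj1 hjk
    rwa [hjc] at this
  have himcard : (S.image (relLoc π)).card = s c := by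
    rw [Finset.card_image_of_injOn hinj, hcard]
  have him : S.image (relLoc π) = Finset.Icc 1 (s c) := by
    apply Finset.eq_of_subset_of_card_le himsub
    rw [himcard, Nat.card_Icc]
    omega
  have key : (S.filter (fun j => relLoc π j ≤ t)).image (relLoc π)
      = (Finset.Icc 1 (s c)).filter (fun v => v ≤ t) := by
    rw [← him, Finset.filter_image]
  have : (S.filter (fun j => relLoc π j ≤ t)).card
      = ((Finset.Icc 1 (s c)).filter (fun v => v ≤ t)).card := by
    rw [← key, Finset.card_image_of_injOn (hinj.mono (by
      intro x hx; exact Finset.mem_of_mem_filter x hx))]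
  rw [this]
  have : (Finset.Icc 1 (s c)).filter (fun v => v ≤ t) = Finset.Icc 1 (min (s c) t) := by
    ext x
    simp only [Finset.mem_filter, Finset.mem_Icc]
    omega
  rw [this, Nat.card_Icc]
  omega

/-- Global count: positions with relative location `≤ t`. -/
lemma count_relLoc_le {L k : ℕ} {s π : ℕ → ℕ} (h : MemPi L k s π) (hs0 : s 0 = 0) (t : ℕ) :
    ((Finset.Icc 1 k).filter (fun i => relLoc π i ≤ t)).card
      = ∑ c ∈ Finset.Icc 1 L, min (s c) t := by
  have hsplit : (Finset.Icc 1 k).filter (fun i => relLoc π i ≤ t)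
      = (Finset.Icc 1 L).biUnion
          (fun c => ((Finset.Icc 1 k).filter (fun j => π j = c)).filter
            (fun j => relLoc π j ≤ t)) := by
    ext j
    simp only [Finset.mem_filter, Finset.mem_Icc, Finset.mem_biUnion]
    constructor
    · rintro ⟨⟨hj1, hjk⟩, ht⟩
      have hne := pi_ne_zero h hs0 hj1 hjk
      exact ⟨π j, ⟨Nat.one_le_iff_ne_zero.mpr hne, h.1 j hj1 hjk⟩, ⟨⟨hj1, hjk⟩, rfl⟩, ht⟩
    · rintro ⟨c, _, ⟨hjk, _⟩, ht⟩
      exact ⟨hjk, ht⟩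
  rw [hsplit, Finset.card_biUnion]
  · apply Finset.sum_congr rfl
    intro c hc
    simp only [Finset.mem_Icc] at hc
    exact count_cluster h hc.2 hc.1 t
  · intro c hc c' hc' hne
    apply Finset.disjoint_left.mpr
    intro j hj hj'
    simp only [Finset.mem_filter] at hj hj'
    exact hne (hj.1.2 ▸ hj'.1.2 ▸ rfl)

/-- Threshold characterization for a vertical order. -/
lemma relLoc_le_iff {L k : ℕ} {s π : ℕ → ℕ} (hV : IsVerticalOrder L k s π) (hs0 : s 0 = 0)
    {i : ℕ} (hi1 : 1 ≤ i) (hik : i ≤ k) (t : ℕ) :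
    relLoc π i ≤ t ↔ i ≤ ∑ c ∈ Finset.Icc 1 L, min (s c) t := by
  rw [← count_relLoc_le hV.1 hs0 t]
  set A := (Finset.Icc 1 k).filter (fun j => relLoc π j ≤ t) with hA
  constructor
  · intro ht
    have hsub : Finset.Icc 1 i ⊆ A := by
      intro j hj
      simp only [Finset.mem_Icc] at hj
      simp only [hA, Finset.mem_filter, Finset.mem_Icc]
      exact ⟨⟨hj.1, hj.2.trans hik⟩,
        le_trans (relLoc_mono hV hs0 hj.1 hj.2 hik) ht⟩
    calc i = (Finset.Icc 1 i).card := by simp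
      _ ≤ A.card := Finset.card_le_card hsub
  · intro hcard
    by_contra ht
    push_neg at ht
    have hsub : A ⊆ Finset.Icc 1 (i - 1) := by
      intro j hj
      simp only [hA, Finset.mem_filter, Finset.mem_Icc] at hj
      simp only [Finset.mem_Icc]
      refine ⟨hj.1.1, ?_⟩
      by_contra hji
      push_neg at hji
      have : relLoc π i ≤ relLoc π j := relLoc_mono hV hs0 hi1 (by omega) hj.1.2
      omega
    have := Finset.card_le_card hsub
    rw [Nat.card_Icc] at this
    omega

lemma kmod (R k : ℕ) : k - k / R * R = k % R := by
  have h1 := Nat.mod_add_div' k R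
  omega

lemma sStar0_le_R {R k : ℕ} (hR : 1 ≤ R) (c : ℕ) : sStar0 R k c ≤ R := by
  unfold sStar0
  have h1 := kmod R k
  have h2 : k % R < R := Nat.mod_lt k hR
  split_ifs <;> omega

/-- The sum `F*(t)` for the balanced distribution is at most `q·min(R,t) + min(r,t)`. -/
lemma sum_min_sStar0_le {L R k : ℕ} (hR : 1 ≤ R) (hkLR : k ≤ L * R) (t : ℕ) :
    ∑ c ∈ Finset.Icc 1 L, min (sStar0 R k c) t ≤ k / R * min R t + min (k % R) t := by
  have hqL : k / R ≤ L := by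
    calc k / R ≤ L * R / R := Nat.div_le_div_right hkLR
      _ = L := Nat.mul_div_cancel L hR
  have hmod := kmod R k
  have hmodlt : k % R < R := Nat.mod_lt k hR
  have hdm := Nat.mod_add_div' k R
  rcases Nat.eq_zero_or_pos (k % R) with hr0 | hrpos
  · -- r = 0 : sum over Icc 1 (k/R)
    have hz : ∀ c ∈ Finset.Icc 1 L, c ∉ Finset.Icc 1 (k / R) →
        min (sStar0 R k c) t = 0 := by
      intro c hc hc'
      simp only [Finset.mem_Icc] at hc hc'
      unfold sStar0
      split_ifs <;> omega
    rw [← Finset.sum_subset (Finset.Icc_subset_Icc le_rfl hqL) hz]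
    have heq : ∀ c ∈ Finset.Icc 1 (k / R), min (sStar0 R k c) t = min R t := by
      intro c hc
      simp only [Finset.mem_Icc] at hc
      unfold sStar0
      rw [if_neg (by omega), if_pos hc.2]
    rw [Finset.sum_congr rfl heq, Finset.sum_const, Nat.card_Icc, smul_eq_mul,
      Nat.add_sub_cancel]
    exact Nat.le_add_right _ _
  · -- r > 0 : sum over Icc 1 (k/R + 1)
    have hq1L : k / R + 1 ≤ L := by
      by_contra hcon
      push_neg at hcon
      have hLq : L ≤ k / R := Nat.lt_succ_iff.mp hcon
      have h3 : L * R ≤ k / R * R := Nat.mul_le_mul_right R hLq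
      have h4 : k / R * R ≤ k := Nat.div_mul_le_self k R
      omega
    have hz : ∀ c ∈ Finset.Icc 1 L, c ∉ Finset.Icc 1 (k / R + 1) →
        min (sStar0 R k c) t = 0 := by
      intro c hc hc'
      simp only [Finset.mem_Icc] at hc hc'
      unfold sStar0
      split_ifs <;> omega
    rw [← Finset.sum_subset (Finset.Icc_subset_Icc le_rfl hq1L) hz]
    rw [Finset.sum_Icc_succ_top (Nat.le_add_left 1 (k / R))]
    have heq : ∀ c ∈ Finset.Icc 1 (k / R), min (sStar0 R k c) t = min R t := by
      intro c hc
      simp only [Finset.mem_Icc] at hc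
      unfold sStar0
      rw [if_neg (by omega), if_pos hc.2]
    rw [Finset.sum_congr rfl heq, Finset.sum_const, Nat.card_Icc, smul_eq_mul]
    have hlast : sStar0 R k (k / R + 1) = k % R := by
      unfold sStar0
      rw [if_neg (Nat.succ_ne_zero _), if_neg (Nat.not_succ_le_self _), if_pos rfl, hmod]
    rw [hlast, Nat.add_sub_cancel]

/-- Any admissible distribution dominates the balanced bound. -/
lemma sum_min_ge {L R k : ℕ} (hR : 1 ≤ R) {s : ℕ → ℕ}
    (hle : ∀ c, 1 ≤ c → c ≤ L → s c ≤ R)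
    (hsum : ∑ c ∈ Finset.Icc 1 L, s c = k) (t : ℕ) :
    k / R * min R t + min (k % R) t ≤ ∑ c ∈ Finset.Icc 1 L, min (s c) t := by
  have hdm := Nat.mod_add_div' k R
  have hmodlt : k % R < R := Nat.mod_lt k hR
  rcases le_or_gt R t with hRt | htR
  · -- t ≥ R : the sum equals k
    have heq : ∀ c ∈ Finset.Icc 1 L, min (s c) t = s c := by
      intro c hc
      simp only [Finset.mem_Icc] at hc
      exact min_eq_left ((hle c hc.1 hc.2).trans hRt)
    rw [Finset.sum_congr rfl heq, hsum, min_eq_left hRt, min_eq_left (by omega)]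
    omega
  · -- t < R
    rw [min_eq_right htR.le]
    set T := (Finset.Icc 1 L).filter (fun c => t ≤ s c) with hT
    set Tc := (Finset.Icc 1 L).filter (fun c => ¬ t ≤ s c) with hTc
    have hsplit : ∑ c ∈ T, min (s c) t + ∑ c ∈ Tc, min (s c) t
        = ∑ c ∈ Finset.Icc 1 L, min (s c) t :=
      Finset.sum_filter_add_sum_filter_not _ _ _
    have hTeq : ∑ c ∈ T, min (s c) t = T.card * t := by
      rw [Finset.sum_congr rfl (fun c hc => min_eq_right
        (Finset.mem_filter.mp hc).2), Finset.sum_const, smul_eq_mul]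
    have hTceq : ∑ c ∈ Tc, min (s c) t = ∑ c ∈ Tc, s c := by
      apply Finset.sum_congr rfl
      intro c hc
      have := (Finset.mem_filter.mp hc).2
      exact min_eq_left (by omega)
    have hTbound : ∑ c ∈ T, s c ≤ T.card * R := by
      have := Finset.sum_le_card_nsmul T s R (by
        intro c hc
        have hc' := Finset.mem_filter.mp hc
        simp only [Finset.mem_Icc] at hc'
        exact hle c hc'.1.1 hc'.1.2)
      rwa [smul_eq_mul] at this
    have htot : ∑ c ∈ T, s c + ∑ c ∈ Tc, s c = k := by
      rw [Finset.sum_filter_add_sum_filter_not] at *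
      exact hsum
    rw [← hsplit, hTeq, hTceq]
    set p := T.card with hp
    set q := k / R with hq
    set r := k % R with hr
    set ST := ∑ c ∈ T, s c with hST
    set STc := ∑ c ∈ Tc, s c with hSTc
    -- goal : q * t + min r t ≤ p * t + STc
    rcases le_or_gt p q with hpq | hqp
    · -- p ≤ q
      have key : q * t + p * R ≤ q * R + p * t := by
        zify
        nlinarith [mul_nonneg (sub_nonneg.mpr (show (p:ℤ) ≤ q from by exact_mod_cast hpq))
          (sub_nonneg.mpr (show (t:ℤ) ≤ R from by exact_mod_cast htR.le))]
      have hmr : min r t ≤ r := min_le_left _ _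
      -- q*R + r = k, ST + STc = k, ST ≤ p*R
      omega
    · -- q < p
      have key : (q + 1) * t ≤ p * t := Nat.mul_le_mul_right t hqp
      have hmt : min r t ≤ t := min_le_right _ _
      have : q * t + t ≤ p * t := by
        calc q * t + t = (q + 1) * t := by ring
          _ ≤ p * t := key
      omega

/-- Weight comparison when the relative location is larger. -/
lemma weight_le {dI dC i h h' : ℕ} {βI βC : ℝ} (hβ : βC ≤ βI) (hβC : 0 < βC)
    (hh : h ≤ h') (hhi : h' ≤ i) (hhd : h' ≤ dI + 1) :
    ((dI + 1 - h' : ℕ) : ℝ) * βI + ((dC - (i - h') : ℕ) : ℝ) * βC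
      ≤ ((dI + 1 - h : ℕ) : ℝ) * βI + ((dC - (i - h) : ℕ) : ℝ) * βC := by
  have e1 : (dI + 1 - h) = (dI + 1 - h') + (h' - h) := by omega
  have e2 : dC - (i - h') ≤ (dC - (i - h)) + (h' - h) := by omega
  have c1 : ((dI + 1 - h : ℕ) : ℝ) = ((dI + 1 - h' : ℕ) : ℝ) + ((h' - h : ℕ) : ℝ) := by
    exact_mod_cast congrArg (Nat.cast : ℕ → ℝ) e1
  have c2 : ((dC - (i - h') : ℕ) : ℝ) ≤ ((dC - (i - h) : ℕ) : ℝ) + ((h' - h : ℕ) : ℝ) := by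
    exact_mod_cast e2
  have hd0 : (0 : ℝ) ≤ ((h' - h : ℕ) : ℝ) := Nat.cast_nonneg _
  rw [c1]
  nlinarith [mul_le_mul_of_nonneg_right c2 hβC.le, mul_le_mul_of_nonneg_right hβ hd0]

end Stmt3Aux
/-- among all distributions without separate nodes, the output `s*` of the
horizontal selection algorithm, combined with its vertical order, minimizes the min-cut. -/
theorem stmt3 (L R k dI dC : ℕ) (βI βC α : ℝ)
    (hL : 1 ≤ L) (hR : 2 ≤ R) (hk : 2 ≤ k)
    (hdI : dI = R - 1) (hdC : 1 ≤ dC) (hkd : k ≤ dI + dC)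
    (hβ : βC ≤ βI) (hβC : 0 < βC) (hα : 0 < α)
    (hkLR : k ≤ L * R)
    (πstar : ℕ → ℕ) (hstar : IsVerticalOrder L k (sStar0 R k) πstar)
    (s : ℕ → ℕ) (hs : IsDist L R k s) (hs0 : s 0 = 0)
    (πs : ℕ → ℕ) (hπs : IsVerticalOrder L k s πs) :
    MC k dI dC βI βC α πstar ≤ MC k dI dC βI βC α πs := by
  classical
  have hR1 : 1 ≤ R := by omega
  have hssum : ∑ c ∈ Finset.Icc 1 L, s c = k := by
    have h1 : Finset.range (L + 1) = insert 0 (Finset.Icc 1 L) := by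
      ext x
      simp only [Finset.mem_Icc, Finset.mem_range, Finset.mem_insert]
      omega
    have h2 := hs.2.2
    rw [h1, Finset.sum_insert (by simp)] at h2
    omega
  have hstar0 : sStar0 R k 0 = 0 := by simp [sStar0]
  unfold MC
  apply Finset.sum_le_sum
  intro i hi
  rw [Finset.mem_Icc] at hi
  obtain ⟨hi1, hik⟩ := hi
  have hne1 : πstar i ≠ 0 := Stmt3Aux.pi_ne_zero hstar.1 hstar0 hi1 hik
  have hne2 : πs i ≠ 0 := Stmt3Aux.pi_ne_zero hπs.1 hs0 hi1 hik
  have hcmp : relLoc πs i ≤ relLoc πstar i := by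
    set t := relLoc πstar i with ht
    have h1 : i ≤ ∑ c ∈ Finset.Icc 1 L, min (sStar0 R k c) t :=
      (Stmt3Aux.relLoc_le_iff hstar hstar0 hi1 hik t).mp le_rfl
    have h2 : ∑ c ∈ Finset.Icc 1 L, min (sStar0 R k c) t
        ≤ ∑ c ∈ Finset.Icc 1 L, min (s c) t :=
      le_trans (Stmt3Aux.sum_min_sStar0_le hR1 hkLR t)
        (Stmt3Aux.sum_min_ge hR1 hs.2.1 hssum t)
    exact (Stmt3Aux.relLoc_le_iff hπs hs0 hi1 hik t).mpr (h1.trans h2)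
  have hub : relLoc πstar i ≤ dI + 1 := by
    have h1 : relLoc πstar i ≤ sStar0 R k (πstar i) :=
      Stmt3Aux.relLoc_le_s hstar.1 hi1 hik
    have h2 : sStar0 R k (πstar i) ≤ R := Stmt3Aux.sStar0_le_R hR1 _
    omega
  have hiu : relLoc πstar i ≤ i := Stmt3Aux.relLoc_le_self πstar i
  apply min_le_min le_rfl
  rw [weight, weight, if_neg hne1, if_neg hne2]
  unfold aCoef bCoef
  exact Stmt3Aux.weight_le hβ hβC hcmp hiu hub
end
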